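/- If w is a finite nonempty rich word, then the longest palindromic suffix of w occurs exactly once as a factor of w. -/

import Mathlib

/-!
Appending a letter `a` to a word `u` creates at most one new palindromic factor, namely the
longest palindromic suffix of `u ++ [a]`: a shorter palindromic suffix is also a proper prefix
of it, hence already a factor of `u`. So a word `w` has at most `|w| + 1` palindromic factors,
and in a rich word `u ++ [a]` the longest palindromic suffix must be new. A factor of `u ++ [a]`
that is not a factor of `u` can only occur as a suffix, i.e. once.
-/

/-- The set of palindromic factors of a word `w` (including the empty word). -/
def palFactors {α : Type*} [DecidableEq α] (w : List α) : Finset (List α) :=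
  ((w.inits.flatMap List.tails).filter fun u => u.reverse = u).toFinset

/-- A word is rich if it has `|w| + 1` distinct palindromic factors
(including the empty word). -/
def Rich {α : Type*} [DecidableEq α] (w : List α) : Prop :=
  (palFactors w).card = w.length + 1

/-- `s` is the longest palindromic suffix of `u`: a nonempty palindromic suffix of
maximal length. -/
def IsLPS {α : Type*} (u s : List α) : Prop :=
  s ≠ [] ∧ s.reverse = s ∧ s <:+ u ∧
    ∀ t : List α, t <:+ u → t.reverse = t → t.length ≤ s.length

/-- Number of occurrences of `s` as a factor of `w` (as the number of starting
positions at which `s` occurs). -/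
def numOcc {α : Type*} [DecidableEq α] (s w : List α) : ℕ :=
  ((List.range (w.length + 1)).filter fun i => (w.drop i).take s.length = s).length

open List

section Words

variable {α : Type*}

theorem prefix_of_suffix_of_reverse_eq {p q : List α} (hp : p.reverse = p)
    (hq : q.reverse = q) (h : p <:+ q) : p <+: q := by
  rwa [← reverse_suffix, hp, hq]

theorem infix_of_prefix_of_suffix_concat {p q u : List α} {a : α}
    (hq : q <:+ u ++ [a]) (hp : p <+: q) (hne : p ≠ q) : p <:+: u := by
  obtain rfl | ⟨t, rfl, ht⟩ := suffix_concat_iff.mp hq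
  · exact absurd (prefix_nil.mp hp) hne
  · obtain h | h := prefix_concat_iff.mp hp
    · exact absurd h hne
    · exact h.isInfix.trans ht.isInfix

theorem infix_of_take_drop_append_eq {u v s : List α} {i : ℕ}
    (h : ((u ++ v).drop i).take s.length = s) (hi : i + s.length ≤ u.length) : s <:+: u := by
  rw [take_drop, take_append_of_le_length hi] at h
  rw [← h]
  exact (drop_suffix _ _).isInfix.trans (take_prefix _ _).isInfix

end Words

section PalindromicFactors

variable {α : Type*} [DecidableEq α]

theorem mem_palFactors {p w : List α} : p ∈ palFactors w ↔ p.reverse = p ∧ p <:+: w := by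
  simp only [palFactors, mem_toFinset, mem_filter, mem_flatMap, mem_inits, mem_tails,
    decide_eq_true_eq]
  constructor
  · rintro ⟨⟨q, hq, hp⟩, hpal⟩
    exact ⟨hpal, hp.isInfix.trans hq.isInfix⟩
  · rintro ⟨hpal, x, y, rfl⟩
    exact ⟨⟨x ++ p, prefix_append _ _, suffix_append x p⟩, hpal⟩

theorem isSuffix_of_mem_palFactors_concat_of_notMem {p u : List α} {a : α}
    (hp : p ∈ palFactors (u ++ [a])) (hpu : p ∉ palFactors u) :
    p.reverse = p ∧ p <:+ u ++ [a] := by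
  rw [mem_palFactors] at hp hpu
  exact ⟨hp.1, (infix_concat_iff.mp hp.2).resolve_right fun h => hpu ⟨hp.1, h⟩⟩

theorem mem_palFactors_of_isSuffix_of_length_lt {p q u : List α} {a : α}
    (hp : p.reverse = p) (hq : q.reverse = q) (hps : p <:+ u ++ [a]) (hqs : q <:+ u ++ [a])
    (hlt : p.length < q.length) : p ∈ palFactors u :=
  mem_palFactors.mpr ⟨hp, infix_of_prefix_of_suffix_concat hqs
    (prefix_of_suffix_of_reverse_eq hp hq (suffix_of_suffix_length_le hps hqs hlt.le))
    (ne_of_apply_ne length hlt.ne)⟩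

theorem card_palFactors_concat_sdiff_le_one (u : List α) (a : α) :
    (palFactors (u ++ [a]) \ palFactors u).card ≤ 1 := by
  refine Finset.card_le_one.mpr fun p hp q hq => ?_
  rw [Finset.mem_sdiff] at hp hq
  obtain ⟨hppal, hps⟩ := isSuffix_of_mem_palFactors_concat_of_notMem hp.1 hp.2
  obtain ⟨hqpal, hqs⟩ := isSuffix_of_mem_palFactors_concat_of_notMem hq.1 hq.2
  obtain hlt | heq | hgt := lt_trichotomy p.length q.length
  · exact absurd (mem_palFactors_of_isSuffix_of_length_lt hppal hqpal hps hqs hlt) hp.2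
  · exact (suffix_of_suffix_length_le hps hqs heq.le).eq_of_length heq
  · exact absurd (mem_palFactors_of_isSuffix_of_length_lt hqpal hppal hqs hps hgt) hq.2

theorem card_palFactors_le (w : List α) : (palFactors w).card ≤ w.length + 1 := by
  induction w using reverseRecOn with
  | nil => simp [palFactors]
  | append_singleton u a ih =>
    calc (palFactors (u ++ [a])).card
        ≤ (palFactors (u ++ [a]) \ palFactors u).card + (palFactors u).card :=
          Finset.card_le_card_sdiff_add_card
      _ ≤ (u ++ [a]).length + 1 := by
          have := card_palFactors_concat_sdiff_le_one u a
          simp only [length_append, length_singleton]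
          omega

theorem Rich.not_infix_of_isLPS {u s : List α} {a : α} (hrich : Rich (u ++ [a]))
    (hs : IsLPS (u ++ [a]) s) : ¬ s <:+: u := by
  obtain ⟨-, hspal, hss, hsmax⟩ := hs
  intro hsu
  have hsub : palFactors (u ++ [a]) ⊆ palFactors u := by
    intro p hp
    by_contra hpu
    obtain ⟨hppal, hps⟩ := isSuffix_of_mem_palFactors_concat_of_notMem hp hpu
    obtain hlt | heq := (hsmax p hps hppal).lt_or_eq
    · exact hpu (mem_palFactors_of_isSuffix_of_length_lt hppal hspal hps hss hlt)
    · rw [(suffix_of_suffix_length_le hps hss heq.le).eq_of_length heq] at hpu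
      exact hpu (mem_palFactors.mpr ⟨hspal, hsu⟩)
  have hcard_w := Finset.card_le_card hsub
  have hcard_u := card_palFactors_le u
  simp only [Rich, length_append, length_singleton] at hrich
  omega

theorem numOcc_eq_one {s w : List α} {i : ℕ} (hi : i ≤ w.length)
    (hocc : (w.drop i).take s.length = s)
    (huniq : ∀ j ≤ w.length, (w.drop j).take s.length = s → j = i) : numOcc s w = 1 := by
  have hfilter : ∀ j ∈ range (w.length + 1),
      decide ((w.drop j).take s.length = s) = (j == i) := by
    intro j hj
    have hjw : j ≤ w.length := Nat.le_of_lt_succ (mem_range.mp hj)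
    rw [decide_eq_decide.mpr ⟨huniq j hjw, fun h => h ▸ hocc⟩]
    rfl
  rw [numOcc, filter_congr hfilter, ← countP_eq_length_filter, ← count]
  exact count_eq_one_of_mem nodup_range (mem_range.mpr (Nat.lt_succ_of_le hi))

theorem numOcc_concat_eq_one_of_not_infix {s u : List α} {a : α} (hs : s <:+ u ++ [a])
    (hsu : ¬ s <:+: u) : numOcc s (u ++ [a]) = 1 := by
  have hlen := hs.length_le
  refine numOcc_eq_one (Nat.sub_le _ _) (by rw [← suffix_iff_eq_drop.mp hs]; exact take_length)
    fun j hjw hj => ?_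
  have hj_le : s.length ≤ (u ++ [a]).length - j := by
    have := congrArg length hj
    simp only [length_take, length_drop] at this
    omega
  simp only [length_append, length_singleton] at hlen hjw hj_le ⊢
  by_contra hne
  exact hsu (infix_of_take_drop_append_eq hj (by omega))

end PalindromicFactors

theorem stmt_10_general {α : Type*} [DecidableEq α] (w s : List α)
    (hrich : Rich w) (hs : IsLPS w s) : numOcc s w = 1 := by
  obtain rfl | ⟨u, a, rfl⟩ := w.eq_nil_or_concat'
  · exact absurd (suffix_nil.mp hs.2.2.1) hs.1
  · exact numOcc_concat_eq_one_of_not_infix hs.2.2.1 (hrich.not_infix_of_isLPS hs)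

/-- the longest palindromic suffix of a nonempty rich word occurs
exactly once as a factor of it. -/
theorem stmt_10 {α : Type*} [DecidableEq α] (w s : List α) (hw : w ≠ [])
    (hrich : Rich w) (hs : IsLPS w s) : numOcc s w = 1 :=
  stmt_10_general w s hrich hs
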